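/- Let p be an odd prime and let (G,γ) be a ℤ/pℤ-colored graph with n vertices and 2n − 1 edges. Then (G,γ) is a cone-Laman graph if and only if its symmetric lift (G̃,φ) is Laman-sparse. -/

import Mathlib

/-!
Preamble: finite directed multigraphs with edge colors in an abelian group
("colored graphs"), gain groups and ρ-rank, the Ross / cone-Laman /
cylinder-Laman sparsity counts, colored Henneberg moves, undirected
multigraphs, (k,ℓ)-sparsity, uncolored Henneberg moves, and symmetric lifts.
-/

/-- A finite directed multigraph with edge colors in `Γ` (a "Γ-colored graph").
Self-loops and parallel edges are allowed. -/
structure CMG (Γ : Type) where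
  V : Type
  E : Type
  finV : Finite V
  finE : Finite E
  src : E → V
  dst : E → V
  color : E → Γ

attribute [instance] CMG.finV CMG.finE

instance {α : Type*} [Finite α] : Finite (Option α) :=
  Finite.of_equiv _ (Equiv.optionEquivSumPUnit.{0} α).symm

namespace CMG

variable {Γ : Type} [AddCommGroup Γ]

/-- `e` is an edge from `a` to `v` with color `c`, in the oriented sense:
either it is stored as `a → v` with color `c`, or as `v → a` with color `-c`
(reversing an edge while negating its color gives the same colored graph). -/
def IsEdgeFromTo (G : CMG Γ) (e : G.E) (a v : G.V) (c : Γ) : Prop :=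
  (G.src e = a ∧ G.dst e = v ∧ G.color e = c) ∨
    (G.src e = v ∧ G.dst e = a ∧ G.color e = -c)

/-- `e` is incident to the vertex `v`. -/
def Incident (G : CMG Γ) (e : G.E) (v : G.V) : Prop :=
  G.src e = v ∨ G.dst e = v

/-- `e` is a self-loop at `v`. -/
def IsLoopAt (G : CMG Γ) (e : G.E) (v : G.V) : Prop :=
  G.src e = v ∧ G.dst e = v

/-- The vertices of the edge-induced subgraph on the edge set `F`. -/
def vertsIn (G : CMG Γ) (F : Set G.E) : Set G.V :=
  {v | ∃ e ∈ F, G.Incident e v}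

/-- `Walk G F u w γ`: there is a walk inside the edge set `F` from `u` to `w`
whose signed color sum (colors of forward-traversed edges added, colors of
backward-traversed edges subtracted) is `γ`. -/
inductive Walk (G : CMG Γ) (F : Set G.E) : G.V → G.V → Γ → Prop
  | nil (v : G.V) : Walk G F v v 0
  | fwd {x : G.V} {γ : Γ} (e : G.E) (he : e ∈ F) (hw : Walk G F (G.dst e) x γ) :
      Walk G F (G.src e) x (G.color e + γ)
  | bwd {x : G.V} {γ : Γ} (e : G.E) (he : e ∈ F) (hw : Walk G F (G.src e) x γ) :
      Walk G F (G.dst e) x (-G.color e + γ)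

/-- `u` and `w` are joined by a walk in the edge set `F`. -/
def Reaches (G : CMG Γ) (F : Set G.E) (u w : G.V) : Prop :=
  ∃ γ, G.Walk F u w γ

/-- The connected component of `v` in the edge set `F`. -/
def comp (G : CMG Γ) (F : Set G.E) (v : G.V) : Set G.V :=
  {w | G.Reaches F v w}

/-- The gain group (ρ-image) of the edge set `F` based at the vertex `v`:
the subgroup of `Γ` generated by the signed color sums of closed walks at `v`. -/
def gainGroup (G : CMG Γ) (F : Set G.E) (v : G.V) : AddSubgroup Γ :=
  AddSubgroup.closure {γ | G.Walk F v v γ}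

/-- The ρ-image of the whole edge set `F` (over all base vertices). -/
def totalGain (G : CMG Γ) (F : Set G.E) : AddSubgroup Γ :=
  AddSubgroup.closure {γ | ∃ v, G.Walk F v v γ}

end CMG

/-- The rank of a subgroup of an abelian group: the minimal cardinality of a
finite generating set. -/
noncomputable def subgroupRank {Γ : Type} [AddCommGroup Γ] (H : AddSubgroup Γ) : ℕ :=
  sInf {n | ∃ s : Finset Γ, s.card = n ∧ AddSubgroup.closure (s : Set Γ) = H}

namespace CMG

variable {Γ : Type} [AddCommGroup Γ]

/-- The number of connected components of the edge-induced subgraph on `F`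
whose ρ-rank is `i`. -/
noncomputable def compCount (G : CMG Γ) (F : Set G.E) (i : ℕ) : ℕ :=
  Set.ncard {S : Set G.V |
    ∃ v ∈ G.vertsIn F, S = G.comp F v ∧ subgroupRank (G.gainGroup F v) = i}

/-- The number of connected components of the whole graph (all vertices,
all edges) whose ρ-rank is `i`. -/
noncomputable def compCountTop (G : CMG Γ) (i : ℕ) : ℕ :=
  Set.ncard {S : Set G.V |
    ∃ v : G.V, S = G.comp Set.univ v ∧ subgroupRank (G.gainGroup Set.univ v) = i}

/-- The Ross count `m' ≤ 2n' - 3c₀' - 2(c₁' + c₂')` for one edge set. -/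
def RossCount (G : CMG Γ) (F : Set G.E) : Prop :=
  (F.ncard : ℤ) ≤ 2 * (G.vertsIn F).ncard - 3 * G.compCount F 0
    - 2 * (G.compCount F 1 + G.compCount F 2)

/-- Ross sparsity: the Ross count holds for every edge-induced subgraph. -/
def IsRossSparse (G : CMG Γ) : Prop :=
  ∀ F : Set G.E, G.RossCount F

/-- A Ross graph: Ross-sparse and the count holds with equality on the whole
graph. -/
def IsRossGraph (G : CMG Γ) : Prop :=
  G.IsRossSparse ∧
    (Nat.card G.E : ℤ) = 2 * Nat.card G.V - 3 * G.compCountTop 0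
      - 2 * (G.compCountTop 1 + G.compCountTop 2)

/-- The cone-Laman count `m' ≤ 2n' - 3c₀' - c₁' - c₂'` for one edge set. -/
def ConeLamanCount (G : CMG Γ) (F : Set G.E) : Prop :=
  (F.ncard : ℤ) ≤ 2 * (G.vertsIn F).ncard - 3 * G.compCount F 0
    - G.compCount F 1 - G.compCount F 2

/-- Cone-Laman sparsity. -/
def IsConeLamanSparse (G : CMG Γ) : Prop :=
  ∀ F : Set G.E, G.ConeLamanCount F

/-- A cone-Laman graph: cone-Laman-sparse with equality on the whole graph. -/
def IsConeLaman (G : CMG Γ) : Prop :=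
  G.IsConeLamanSparse ∧
    (Nat.card G.E : ℤ) = 2 * Nat.card G.V - 3 * G.compCountTop 0
      - G.compCountTop 1 - G.compCountTop 2

/-- The cylinder-Laman count `m' ≤ 2n' + r - 3c₀' - 2(c₁' + c₂')`. -/
def CylinderLamanCount (G : CMG Γ) (F : Set G.E) : Prop :=
  (F.ncard : ℤ) ≤ 2 * (G.vertsIn F).ncard + subgroupRank (G.totalGain F)
    - 3 * G.compCount F 0 - 2 * (G.compCount F 1 + G.compCount F 2)

/-- Cylinder-Laman sparsity. -/
def IsCylinderLamanSparse (G : CMG Γ) : Prop :=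
  ∀ F : Set G.E, G.CylinderLamanCount F

/-- A cylinder-Laman graph: cylinder-Laman-sparse with equality on the whole
graph. -/
def IsCylinderLaman (G : CMG Γ) : Prop :=
  G.IsCylinderLamanSparse ∧
    (Nat.card G.E : ℤ) = 2 * Nat.card G.V + subgroupRank (G.totalGain Set.univ)
      - 3 * G.compCountTop 0 - 2 * (G.compCountTop 1 + G.compCountTop 2)

/-- Isomorphism of colored graphs; an edge may be reversed provided its color
is negated (which represents the same colored graph). -/
def Iso (G H : CMG Γ) : Prop :=
  ∃ (fv : G.V ≃ H.V) (fe : G.E ≃ H.E), ∀ e : G.E,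
    (H.src (fe e) = fv (G.src e) ∧ H.dst (fe e) = fv (G.dst e) ∧
      H.color (fe e) = G.color e) ∨
    (H.src (fe e) = fv (G.dst e) ∧ H.dst (fe e) = fv (G.src e) ∧
      H.color (fe e) = -G.color e)

/-- Delete a vertex and all edges incident to it. -/
def deleteVertex (G : CMG Γ) (v : G.V) : CMG Γ where
  V := {w : G.V // w ≠ v}
  E := {e : G.E // G.src e ≠ v ∧ G.dst e ≠ v}
  finV := inferInstance
  finE := inferInstance
  src := fun e => ⟨G.src e.1, e.2.1⟩
  dst := fun e => ⟨G.dst e.1, e.2.2⟩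
  color := fun e => G.color e.1

/-- Add a single new directed edge from `x` to `y` with color `c`. -/
def addEdge (G : CMG Γ) (x y : G.V) (c : Γ) : CMG Γ where
  V := G.V
  E := Option G.E
  finV := inferInstance
  finE := inferInstance
  src := fun e => e.elim x G.src
  dst := fun e => e.elim y G.dst
  color := fun e => e.elim c G.color

/-- The other endpoint of an edge incident to `v` (junk value on loops). -/
noncomputable def otherEnd (G : CMG Γ) (v : G.V) (e : G.E) : G.V :=
  @ite _ (G.src e = v) (Classical.dec _) (G.dst e) (G.src e)

/-- The color of an edge incident to `v`, read in the direction pointing into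
`v` (junk value on loops). -/
noncomputable def colorInto (G : CMG Γ) (v : G.V) (e : G.E) : Γ :=
  @ite _ (G.dst e = v) (Classical.dec _) (G.color e) (-G.color e)

/-- The colored Henneberg move (H1c): `H` is obtained from `G` by adding one
new vertex `v` and two new edges `av`, `bv` (directed into `v`, which is no
restriction); if `a = b` the two new colors must be distinct. -/
def H1cRel (G H : CMG Γ) : Prop :=
  ∃ (v a b : H.V) (_ : a ≠ v) (_ : b ≠ v) (e₁ e₂ : H.E) (γ₁ γ₂ : Γ),
    e₁ ≠ e₂ ∧
    H.IsEdgeFromTo e₁ a v γ₁ ∧ H.IsEdgeFromTo e₂ b v γ₂ ∧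
    (∀ e, H.Incident e v → e = e₁ ∨ e = e₂) ∧
    (a = b → γ₁ ≠ γ₂) ∧
    Iso G (H.deleteVertex v)

/-- The colored lollipop move (H1c'): `H` is obtained from `G` by adding one
new vertex `v`, one edge `av` with arbitrary color, and one self-loop at `v`
with nonzero color. -/
def H1cpRel (G H : CMG Γ) : Prop :=
  ∃ (v a : H.V) (_ : a ≠ v) (e₁ e₂ : H.E) (γ₁ : Γ),
    e₁ ≠ e₂ ∧
    H.IsEdgeFromTo e₁ a v γ₁ ∧
    H.IsLoopAt e₂ v ∧ H.color e₂ ≠ 0 ∧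
    (∀ e, H.Incident e v → e = e₁ ∨ e = e₂) ∧
    Iso G (H.deleteVertex v)

/-- The colored Henneberg move (H2c): `H` is obtained from `G` by removing an
edge `ab` with color `γ₁ - γ₂`, adding a new vertex `v`, and adding edges
`av`, `bv`, `cv` with colors `γ₁`, `γ₂`, `γ₃` (oriented into `v`, which is no
restriction); parallel new edges must have distinct colors. -/
def H2cRel (G H : CMG Γ) : Prop :=
  ∃ (v a b c : H.V) (ha : a ≠ v) (hb : b ≠ v) (_ : c ≠ v)
      (e₁ e₂ e₃ : H.E) (γ₁ γ₂ γ₃ : Γ),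
    e₁ ≠ e₂ ∧ e₁ ≠ e₃ ∧ e₂ ≠ e₃ ∧
    H.IsEdgeFromTo e₁ a v γ₁ ∧ H.IsEdgeFromTo e₂ b v γ₂ ∧
    H.IsEdgeFromTo e₃ c v γ₃ ∧
    (∀ e, H.Incident e v → e = e₁ ∨ e = e₂ ∨ e = e₃) ∧
    (a = b → γ₁ ≠ γ₂) ∧ (a = c → γ₁ ≠ γ₃) ∧ (b = c → γ₂ ≠ γ₃) ∧
    Iso G ((H.deleteVertex v).addEdge ⟨a, ha⟩ ⟨b, hb⟩ (γ₁ - γ₂))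

/-- The base graph for Ross graphs: two vertices joined by two parallel
directed edges with distinct colors. -/
def IsRossBase (G : CMG Γ) : Prop :=
  ∃ (u v : G.V) (e₁ e₂ : G.E) (γ₁ γ₂ : Γ),
    u ≠ v ∧ e₁ ≠ e₂ ∧
    (∀ w : G.V, w = u ∨ w = v) ∧ (∀ e : G.E, e = e₁ ∨ e = e₂) ∧
    G.IsEdgeFromTo e₁ u v γ₁ ∧ G.IsEdgeFromTo e₂ u v γ₂ ∧ γ₁ ≠ γ₂

/-- The base graph for cone-Laman and cylinder-Laman graphs: a single vertex
with one self-loop carrying a nonzero color. -/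
def IsLoopBase (G : CMG Γ) : Prop :=
  ∃ (v : G.V) (e : G.E),
    (∀ w : G.V, w = v) ∧ (∀ e' : G.E, e' = e) ∧
    G.IsLoopAt e v ∧ G.color e ≠ 0

/-- `Constructible Base R G`: the colored graph `G` can be produced from a
base graph (a graph satisfying `Base`) by a finite sequence of moves from the
relation `R`. -/
inductive Constructible (Base : CMG Γ → Prop) (R : CMG Γ → CMG Γ → Prop) :
    CMG Γ → Prop
  | base (G : CMG Γ) (h : Base G) : Constructible Base R G
  | step (G H : CMG Γ) (hG : Constructible Base R G) (hR : R G H) :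
      Constructible Base R H

/-- The degree of a vertex; a self-loop contributes two. -/
noncomputable def degree (G : CMG Γ) (v : G.V) : ℕ :=
  Nat.card {e : G.E // G.src e = v} + Nat.card {e : G.E // G.dst e = v}

end CMG

/-- Reduce the colors of a `ℤ`-colored graph modulo `p`. -/
def CMG.reduceMod (G : CMG ℤ) (p : ℕ) : CMG (ZMod p) where
  V := G.V
  E := G.E
  finV := G.finV
  finE := G.finE
  src := G.src
  dst := G.dst
  color := fun e => ((G.color e : ℤ) : ZMod p)

/-- An undirected multigraph (possibly infinite), given by the two endpoint
functions of its edges; the orientation of an edge carries no information. -/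
structure UMG where
  V : Type
  E : Type
  fst : E → V
  snd : E → V

namespace UMG

/-- The edge `e` joins `u` and `w`. -/
def Betw (M : UMG) (e : M.E) (u w : M.V) : Prop :=
  (M.fst e = u ∧ M.snd e = w) ∨ (M.fst e = w ∧ M.snd e = u)

/-- `e` is incident to `v`. -/
def Incident (M : UMG) (e : M.E) (v : M.V) : Prop :=
  M.fst e = v ∨ M.snd e = v

/-- `e` is a self-loop. -/
def IsLoop (M : UMG) (e : M.E) : Prop :=
  M.fst e = M.snd e

/-- The vertices of the edge-induced subgraph on the edge set `F`. -/
def uverts (M : UMG) (F : Set M.E) : Set M.V :=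
  {v | ∃ e ∈ F, M.Incident e v}

/-- `(k,ℓ)`-sparsity: every (finite, nonempty) edge-induced subgraph with `n'`
vertices and `m'` edges satisfies `m' ≤ k n' - ℓ`. -/
def Sparse (M : UMG) (k ℓ : ℤ) : Prop :=
  ∀ F : Set M.E, F.Finite → F.Nonempty →
    (F.ncard : ℤ) ≤ k * (M.uverts F).ncard - ℓ

/-- Laman-sparse means `(2,3)`-sparse. -/
def LamanSparse (M : UMG) : Prop :=
  M.Sparse 2 3

/-- `F` is a (finite, nonempty) violation of the Laman count. -/
def ViolatesLaman (M : UMG) (F : Set M.E) : Prop :=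
  F.Finite ∧ F.Nonempty ∧ ¬ ((F.ncard : ℤ) ≤ 2 * (M.uverts F).ncard - 3)

/-- A Laman-circuit: an edge-minimal violation of Laman sparsity. -/
def LamanCircuit (M : UMG) (C : Set M.E) : Prop :=
  M.ViolatesLaman C ∧ ∀ F : Set M.E, F ⊂ C → ¬ M.ViolatesLaman F

/-- Connectivity inside an edge set. -/
def Reaches (M : UMG) (F : Set M.E) : M.V → M.V → Prop :=
  Relation.ReflTransGen (fun u w => ∃ e ∈ F, M.Betw e u w)

/-- The edge-induced subgraph on `F` is connected. -/
def ConnectedOn (M : UMG) (F : Set M.E) : Prop :=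
  ∀ u ∈ M.uverts F, ∀ w ∈ M.uverts F, M.Reaches F u w

/-- The induced sub-multigraph on a set of vertices. -/
def induce (M : UMG) (W : Set M.V) : UMG where
  V := W
  E := {e : M.E // M.fst e ∈ W ∧ M.snd e ∈ W}
  fst := fun e => ⟨M.fst e.1, e.2.1⟩
  snd := fun e => ⟨M.snd e.1, e.2.2⟩

/-- Delete a vertex and all edges incident to it. -/
def deleteVertex (M : UMG) (v : M.V) : UMG :=
  M.induce {w | w ≠ v}

/-- Add a single new edge joining `x` and `y`. -/
def addEdge (M : UMG) (x y : M.V) : UMG where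
  V := M.V
  E := Option M.E
  fst := fun e => e.elim x M.fst
  snd := fun e => e.elim y M.snd

/-- Add a family of new edges indexed by `I`. -/
def addEdges (M : UMG) (I : Type) (x y : I → M.V) : UMG where
  V := M.V
  E := M.E ⊕ I
  fst := Sum.elim M.fst x
  snd := Sum.elim M.snd y

/-- Isomorphism of undirected multigraphs. -/
def Iso (M N : UMG) : Prop :=
  ∃ (fv : M.V ≃ N.V) (fe : M.E ≃ N.E), ∀ e : M.E,
    (N.fst (fe e) = fv (M.fst e) ∧ N.snd (fe e) = fv (M.snd e)) ∨
    (N.fst (fe e) = fv (M.snd e) ∧ N.snd (fe e) = fv (M.fst e))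

/-- The other endpoint of an edge incident to `v` (junk value on loops). -/
noncomputable def otherEnd (M : UMG) (v : M.V) (e : M.E) : M.V :=
  @ite _ (M.fst e = v) (Classical.dec _) (M.snd e) (M.fst e)

/-- The uncolored Henneberg move (H1), adding the vertex `w`: `N` is obtained
from `M` by adding the new vertex `w` together with two edges joining `w` to
the old graph. -/
def H1At (M N : UMG) (w : N.V) : Prop :=
  (∃ e₁ e₂ : N.E, e₁ ≠ e₂ ∧ N.Incident e₁ w ∧ N.Incident e₂ w ∧
      ¬ N.IsLoop e₁ ∧ ¬ N.IsLoop e₂ ∧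
      ∀ e, N.Incident e w → e = e₁ ∨ e = e₂) ∧
    Iso (N.deleteVertex w) M

/-- The uncolored Henneberg move (H2), splitting an edge between `x` and `y`
and adding the new degree-three vertex `w`: `N` is obtained from `M` by
removing an edge joining `x` and `y` and adding the new vertex `w` together
with edges from `w` to `x`, `y` and some third vertex `z`. -/
def H2SplitAt (M N : UMG) (w x y : N.V) : Prop :=
  (∃ e₁ e₂ e₃ : N.E, e₁ ≠ e₂ ∧ e₁ ≠ e₃ ∧ e₂ ≠ e₃ ∧
      N.Betw e₁ x w ∧ N.Betw e₂ y w ∧ (∃ z, z ≠ w ∧ N.Betw e₃ z w) ∧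
      ∀ e, N.Incident e w → e = e₁ ∨ e = e₂ ∨ e = e₃) ∧
    ∃ (hx : x ≠ w) (hy : y ≠ w),
      Iso ((N.deleteVertex w).addEdge ⟨x, hx⟩ ⟨y, hy⟩) M

/-- The uncolored Henneberg move (H2). -/
def H2Rel (M N : UMG) : Prop :=
  ∃ w x y : N.V, H2SplitAt M N w x y

/-- `(2,2)`-spanning: the graph contains a spanning `(2,2)`-graph. -/
def Spanning22 (M : UMG) : Prop :=
  ∃ F : Set M.E, F.Finite ∧
    (∀ F' : Set M.E, F' ⊆ F → F'.Nonempty →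
      (F'.ncard : ℤ) ≤ 2 * (M.uverts F').ncard - 2) ∧
    (F.ncard : ℤ) = 2 * Nat.card M.V - 2

end UMG

namespace CMG

variable {Γ : Type} [AddCommGroup Γ]

/-- The symmetric lift of a `Γ`-colored graph: vertices `V × Γ`, and each
directed edge `ij` of color `γ` lifts to the edges `{ĩ_δ, j̃_{γ+δ}}`. -/
def liftU (G : CMG Γ) : UMG where
  V := G.V × Γ
  E := G.E × Γ
  fst := fun e => (G.src e.1, e.2)
  snd := fun e => (G.dst e.1, G.color e.1 + e.2)

/-- The lift of an edge set: the union of the fibers over its edges. -/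
def liftEdges (G : CMG Γ) (F : Set G.E) : Set (G.liftU).E :=
  {e | e.1 ∈ F}

/-- The concrete result of the colored Henneberg move (H1c) on `G`, adding a
new vertex `none` and two new edges `a → none`, `b → none` with colors
`γ₁`, `γ₂`. -/
def applyH1c (G : CMG Γ) (a b : G.V) (γ₁ γ₂ : Γ) : CMG Γ where
  V := Option G.V
  E := G.E ⊕ Bool
  finV := inferInstance
  finE := inferInstance
  src := Sum.elim (fun e => some (G.src e)) (fun x => some (cond x b a))
  dst := Sum.elim (fun e => some (G.dst e)) (fun _ => none)
  color := Sum.elim G.color (fun x => cond x γ₂ γ₁)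

/-- The concrete result of the colored Henneberg move (H2c) on `G`: the edge
`f` (from `a := src f` to `b := dst f`) is removed, a new vertex `none` is
added, and edges `a → none`, `b → none`, `c → none` with colors `γ₁`, `γ₂`,
`γ₃` are added. -/
def applyH2c (G : CMG Γ) (f : G.E) (c : G.V) (γ₁ γ₂ γ₃ : Γ) : CMG Γ where
  V := Option G.V
  E := {e : G.E // e ≠ f} ⊕ Fin 3
  finV := inferInstance
  finE := inferInstance
  src := Sum.elim (fun e => some (G.src e.1))
    (fun i => ![some (G.src f), some (G.dst f), some c] i)
  dst := Sum.elim (fun e => some (G.dst e.1)) (fun _ => none)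
  color := Sum.elim (fun e => G.color e.1) (fun i => ![γ₁, γ₂, γ₃] i)

/-- The intermediate uncolored graphs between the lift of `G` and the lift of
`applyH1c G a b γ₁ γ₂`: only the new vertices `ṽ_δ` with `δ ∈ S` (and their
incident edges) are present. -/
def h1cPartial (G : CMG Γ) (a b : G.V) (γ₁ γ₂ : Γ) (S : Set Γ) : UMG :=
  (CMG.liftU (G.applyH1c a b γ₁ γ₂)).induce {w | w.1 ≠ none ∨ w.2 ∈ S}

/-- The intermediate uncolored graphs between the lift of `G` and the lift of
`applyH2c G f c γ₁ γ₂ γ₃`: only the new vertices `ṽ_δ` with `δ ∈ S` (and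
their incident edges) are present, and for `δ ∉ S` the not-yet-split fiber
edge of `f` with endpoints `ã_{δ-γ₁}`, `b̃_{δ-γ₂}` is still present. -/
def h2cPartial (G : CMG Γ) (f : G.E) (c : G.V) (γ₁ γ₂ γ₃ : Γ) (S : Set Γ) :
    UMG :=
  UMG.addEdges
    ((CMG.liftU (G.applyH2c f c γ₁ γ₂ γ₃)).induce {w | w.1 ≠ none ∨ w.2 ∈ S})
    {δ : Γ // δ ∉ S}
    (fun δ => ⟨(some (G.src f), δ.1 - γ₁), Or.inl (by exact Option.some_ne_none _)⟩)
    (fun δ => ⟨(some (G.dst f), δ.1 - γ₂), Or.inl (by exact Option.some_ne_none _)⟩)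

end CMG

/-! Both directions compare an edge set `F` of `G` with its lift, which has `p |F|` edges on
`p |V(F)|` vertices. Since `p` is prime, a connected `F` either has trivial gain group, and then
lifts to `p` disjoint copies of itself, or has gain group `ZMod p`, and then has a connected lift.

If the lift is Laman-sparse, a copy gives `m ≤ 2n - 3` for balanced `F`, and the whole lift gives
`p m ≤ 2 p n - 3`, i.e. `m ≤ 2n - 1`, otherwise; summing over components gives cone-Laman
sparsity, and `2n - 1` edges then force a single spanning component of rank one.

Conversely, a Laman circuit `C` of the lift is connected and projects onto a connected `F`. If `F`
is balanced, `C` is a copy of `F` and violates its count. Otherwise translates of `C` can be glued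
one at a time into the whole lift of `F` keeping `2n ≤ m + 2`, so `2 p n ≤ p (2n - 1) + 2`, which is
impossible for `p ≥ 3`. -/

theorem subgroupRank_eq_zero_iff {Γ : Type} [AddCommGroup Γ] [Finite Γ]
    {H : AddSubgroup Γ} : subgroupRank H = 0 ↔ H = ⊥ := by
  classical
  constructor
  · intro h
    have hgen : {n | ∃ s : Finset Γ, s.card = n ∧
        AddSubgroup.closure (s : Set Γ) = H}.Nonempty :=
      ⟨_, (Set.toFinite (H : Set Γ)).toFinset, rfl, by simp⟩
    obtain ⟨s, hs, hsH⟩ := Nat.sInf_mem hgen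
    have hs : s = ∅ := Finset.card_eq_zero.1 (hs.trans h)
    simpa [hs] using hsH.symm
  · rintro rfl
    exact Nat.eq_zero_of_le_zero (Nat.sInf_le ⟨∅, by simp⟩)

theorem ZMod.addSubgroup_eq_top_of_ne_bot {p : ℕ} [Fact p.Prime] {H : AddSubgroup (ZMod p)}
    (h : H ≠ ⊥) : H = ⊤ :=
  have : Fact (Nat.card (ZMod p)).Prime := by rwa [Nat.card_zmod]
  H.eq_bot_or_eq_top_of_prime_card.resolve_left h

theorem subgroupRank_eq_one_of_ne_bot {p : ℕ} [Fact p.Prime] {H : AddSubgroup (ZMod p)}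
    (h : H ≠ ⊥) : subgroupRank H = 1 := by
  have hgen : AddSubgroup.closure (({1} : Finset (ZMod p)) : Set (ZMod p)) = H := by
    rw [ZMod.addSubgroup_eq_top_of_ne_bot h, Finset.coe_singleton,
      ← AddSubgroup.zmultiples_eq_closure]
    exact zmultiples_eq_top_of_prime_card (Nat.card_zmod p) one_ne_zero
  have hle : subgroupRank H ≤ 1 := Nat.sInf_le ⟨_, Finset.card_singleton 1, hgen⟩
  have hne : subgroupRank H ≠ 0 := fun h0 => h (subgroupRank_eq_zero_iff.1 h0)
  omega

namespace UMG

variable {M : UMG}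

theorem uverts_eq (A : Set M.E) : M.uverts A = M.fst '' A ∪ M.snd '' A := by
  ext v
  simp only [uverts, Incident, Set.mem_ofPred_eq, Set.mem_union, Set.mem_image]
  constructor
  · rintro ⟨e, he, h | h⟩
    exacts [.inl ⟨e, he, h⟩, .inr ⟨e, he, h⟩]
  · rintro (⟨e, he, h⟩ | ⟨e, he, h⟩)
    exacts [⟨e, he, .inl h⟩, ⟨e, he, .inr h⟩]

theorem uverts_union (A B : Set M.E) : M.uverts (A ∪ B) = M.uverts A ∪ M.uverts B := by
  simp only [uverts_eq, Set.image_union]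
  exact Set.union_union_union_comm _ _ _ _

theorem uverts_mono {A B : Set M.E} (h : A ⊆ B) : M.uverts A ⊆ M.uverts B :=
  fun _ ⟨e, he, hinc⟩ => ⟨e, h he, hinc⟩

theorem _root_.Set.Finite.uverts {A : Set M.E} (hA : A.Finite) : (M.uverts A).Finite := by
  rw [uverts_eq]
  exact (hA.image _).union (hA.image _)

theorem Reaches.mono {A B : Set M.E} (h : A ⊆ B) {u w : M.V} (hr : M.Reaches A u w) :
    M.Reaches B u w :=
  Relation.ReflTransGen.mono (fun _ _ ⟨e, he, hb⟩ => ⟨e, h he, hb⟩) _ _ hr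

theorem Reaches.exists_betw_mem_not_mem {A : Set M.E} {X : Set M.V} {u w : M.V}
    (h : M.Reaches A u w) (hu : u ∈ X) (hw : w ∉ X) :
    ∃ e ∈ A, ∃ a b, M.Betw e a b ∧ a ∈ X ∧ b ∉ X := by
  induction h with
  | refl => exact absurd hu hw
  | @tail m b _ hstep ih =>
      obtain ⟨e, he, hb⟩ := hstep
      by_cases hm : m ∈ X
      · exact ⟨e, he, m, b, hb, hm, hw⟩
      · exact ih hm

theorem ConnectedOn.exists_incident_of_ssubset {B U : Set M.E} (hB : M.ConnectedOn B)
    (hUB : U ⊂ B) (hU : U.Nonempty) :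
    ∃ g ∈ B \ U, ∃ a ∈ M.uverts U, M.Incident g a := by
  by_contra! hno
  obtain ⟨x, hxB, hxU⟩ := Set.exists_of_ssubset hUB
  obtain ⟨e, he⟩ := hU
  have hx : M.fst x ∉ M.uverts U := fun h => hno x ⟨hxB, hxU⟩ _ h (.inl rfl)
  obtain ⟨g, hgB, a, b, hab, ha, hb⟩ :=
    (hB _ (uverts_mono hUB.1 ⟨e, he, .inl rfl⟩) _ ⟨x, hxB, .inl rfl⟩).exists_betw_mem_not_mem
      (⟨e, he, .inl rfl⟩ : M.fst e ∈ M.uverts U) hx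
  have hgU : g ∉ U := fun hg => hb ⟨g, hg, by rcases hab with h | h; exacts [.inr h.2, .inl h.1]⟩
  exact hno g ⟨hgB, hgU⟩ a ha (by rcases hab with h | h; exacts [.inl h.1, .inr h.2])

theorem exists_lamanCircuit {F : Set M.E} (hF : M.ViolatesLaman F) : ∃ C, M.LamanCircuit C := by
  obtain ⟨C, ⟨hCF, hC⟩, hmin⟩ := (hF.1.finite_subsets.subset
    (fun D (hD : D ⊆ F ∧ M.ViolatesLaman D) => hD.1)).exists_minimal ⟨F, subset_rfl, hF⟩
  exact ⟨C, hC, fun D hDC hD => hDC.2 (hmin ⟨hDC.1.trans hCF, hD⟩ hDC.1)⟩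

namespace LamanCircuit

variable {C : Set M.E} (hC : M.LamanCircuit C)
include hC

theorem two_mul_ncard_uverts_le : 2 * (M.uverts C).ncard ≤ C.ncard + 2 := by
  have := hC.1.2.2
  omega

theorem ncard_le_of_ssubset {D : Set M.E} (hDC : D ⊂ C) (hD : D.Nonempty) :
    (D.ncard : ℤ) ≤ 2 * (M.uverts D).ncard - 3 := by
  by_contra h
  exact hC.2 D hDC ⟨hC.1.1.subset hDC.1, hD, h⟩

theorem connectedOn : M.ConnectedOn C := by
  intro u hu w hw
  by_contra huw
  set X : Set M.V := {x | M.Reaches C u x}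
  set C₁ : Set M.E := {e | e ∈ C ∧ M.fst e ∈ X}
  have hC₁C : C₁ ⊆ C := fun e he => he.1
  have hinc : ∀ e ∈ C, ∀ x ∈ X, M.Incident e x → e ∈ C₁ ∧ M.snd e ∈ X := by
    intro e he x hx h
    have hfst : M.fst e ∈ X := by
      rcases h with h | h
      · exact h ▸ hx
      · exact hx.tail ⟨e, he, .inr ⟨rfl, h⟩⟩
    exact ⟨⟨he, hfst⟩, hfst.tail ⟨e, he, .inl ⟨rfl, rfl⟩⟩⟩
  have hX₁ : M.uverts C₁ ⊆ X := by
    rintro x ⟨e, he, rfl | rfl⟩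
    exacts [he.2, (hinc e he.1 _ he.2 (.inl rfl)).2]
  have hdisj : Disjoint (M.uverts C₁) (M.uverts (C \ C₁)) := by
    rw [Set.disjoint_left]
    rintro x hx ⟨e, he, hex⟩
    exact he.2 (hinc e he.1 x (hX₁ hx) hex).1
  obtain ⟨eu, heu, hueu⟩ := hu
  obtain ⟨ew, hew, hwew⟩ := hw
  have heu₁ : eu ∈ C₁ := (hinc eu heu u .refl hueu).1
  have hew₁ : ew ∉ C₁ := fun h => huw (hX₁ ⟨ew, h, hwew⟩)
  -- `C₁` and `C \ C₁` are proper parts of `C`, hence Laman-sparse; being vertex-disjoint,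
  -- so is their union `C`.
  have h₁ := hC.ncard_le_of_ssubset ⟨hC₁C, fun h => hew₁ (h hew)⟩ ⟨eu, heu₁⟩
  have h₂ := hC.ncard_le_of_ssubset ⟨Set.sdiff_subset, fun h => (h heu).2 heu₁⟩
    ⟨ew, hew, hew₁⟩
  have hm : (C \ C₁).ncard + C₁.ncard = C.ncard :=
    Set.ncard_sdiff_add_ncard_of_subset hC₁C hC.1.1
  have hn : (M.uverts C).ncard = (M.uverts C₁).ncard + (M.uverts (C \ C₁)).ncard := by
    rw [← Set.ncard_union_eq hdisj (hC.1.1.subset hC₁C).uverts (hC.1.1.sdiff).uverts,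
      ← uverts_union, Set.union_sdiff_cancel hC₁C]
  have := hC.1.2.2
  omega

theorem two_mul_ncard_uverts_union_le {U : Set M.E} (hU : U.Finite)
    (hUdense : 2 * (M.uverts U).ncard ≤ U.ncard + 2) (hCU : ¬ C ⊆ U)
    (htouch : (M.uverts C ∩ M.uverts U).Nonempty) :
    2 * (M.uverts (C ∪ U)).ncard ≤ (C ∪ U).ncard + 2 := by
  have hm := Set.ncard_union_add_ncard_inter C U hC.1.1 hU
  have hn := Set.ncard_union_add_ncard_inter (M.uverts C) (M.uverts U) hC.1.1.uverts hU.uverts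
  have hC2 := hC.two_mul_ncard_uverts_le
  have htouch1 := (Set.ncard_pos (hC.1.1.uverts.inter_of_left _)).2 htouch
  rw [uverts_union]
  rcases (C ∩ U).eq_empty_or_nonempty with h | h
  · rw [h, Set.ncard_empty] at hm
    omega
  · -- the overlap is a proper part of `C`, hence Laman-sparse
    have hCU' := hC.ncard_le_of_ssubset ⟨Set.inter_subset_left,
      fun h' => hCU fun x hx => (h' hx).2⟩ h
    have hle : (M.uverts (C ∩ U)).ncard ≤ (M.uverts C ∩ M.uverts U).ncard :=
      Set.ncard_le_ncard (Set.subset_inter (uverts_mono Set.inter_subset_left)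
        (uverts_mono Set.inter_subset_right)) (hC.1.1.uverts.inter_of_left _)
    omega

end LamanCircuit

end UMG

namespace CMG

section Walks

variable {Γ : Type} [AddCommGroup Γ] {G : CMG Γ} {F : Set G.E}

theorem Walk.append {u w x : G.V} {γ γ' : Γ} (h : G.Walk F u w γ)
    (h' : G.Walk F w x γ') : G.Walk F u x (γ + γ') := by
  induction h with
  | nil v => simpa using h'
  | fwd e he _ ih => rw [add_assoc]; exact .fwd e he (ih h')
  | bwd e he _ ih => rw [add_assoc]; exact .bwd e he (ih h')

theorem Walk.single_fwd {e : G.E} (he : e ∈ F) :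
    G.Walk F (G.src e) (G.dst e) (G.color e) := by
  simpa using Walk.fwd e he (.nil (G.dst e))

theorem Walk.single_bwd {e : G.E} (he : e ∈ F) :
    G.Walk F (G.dst e) (G.src e) (-G.color e) := by
  simpa using Walk.bwd e he (.nil (G.src e))

theorem Walk.reverse {u w : G.V} {γ : Γ} (h : G.Walk F u w γ) :
    G.Walk F w u (-γ) := by
  induction h with
  | nil v => simpa using Walk.nil v
  | fwd e he _ ih => simpa [add_comm] using ih.append (Walk.single_bwd he)
  | bwd e he _ ih => simpa [add_comm] using ih.append (Walk.single_fwd he)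

theorem Walk.mono {F' : Set G.E} (hFF : F ⊆ F') {u w : G.V} {γ : Γ}
    (h : G.Walk F u w γ) : G.Walk F' u w γ := by
  induction h with
  | nil v => exact .nil v
  | fwd e he _ ih => exact .fwd e (hFF he) ih
  | bwd e he _ ih => exact .bwd e (hFF he) ih

theorem Walk.eq_or_mem_vertsIn {u w : G.V} {γ : Γ} (h : G.Walk F u w γ) :
    u = w ∨ (u ∈ G.vertsIn F ∧ w ∈ G.vertsIn F) := by
  induction h with
  | nil v => exact .inl rfl
  | fwd e he _ ih =>
      refine .inr ⟨⟨e, he, .inl rfl⟩, ?_⟩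
      rcases ih with h | h
      · exact h ▸ ⟨e, he, .inr rfl⟩
      · exact h.2
  | bwd e he _ ih =>
      refine .inr ⟨⟨e, he, .inr rfl⟩, ?_⟩
      rcases ih with h | h
      · exact h ▸ ⟨e, he, .inl rfl⟩
      · exact h.2

theorem Reaches.refl (v : G.V) : G.Reaches F v v := ⟨0, .nil v⟩

theorem Reaches.symm {u w : G.V} (h : G.Reaches F u w) : G.Reaches F w u :=
  let ⟨_, hγ⟩ := h; ⟨_, hγ.reverse⟩

theorem Reaches.trans {u w x : G.V} (h : G.Reaches F u w) (h' : G.Reaches F w x) :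
    G.Reaches F u x :=
  let ⟨_, hγ⟩ := h; let ⟨_, hγ'⟩ := h'; ⟨_, hγ.append hγ'⟩

theorem Reaches.of_mem {e : G.E} (he : e ∈ F) : G.Reaches F (G.src e) (G.dst e) :=
  ⟨_, .single_fwd he⟩

theorem mem_gainGroup {v : G.V} {γ : Γ} : γ ∈ G.gainGroup F v ↔ G.Walk F v v γ := by
  let closedWalkGains : AddSubgroup Γ :=
    { carrier := {γ | G.Walk F v v γ}
      zero_mem' := .nil v
      add_mem' := Walk.append
      neg_mem' := Walk.reverse }
  show γ ∈ AddSubgroup.closure (closedWalkGains : Set Γ) ↔ _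
  rw [AddSubgroup.closure_eq]
  rfl

theorem Reaches.gainGroup_eq {u w : G.V} (h : G.Reaches F u w) :
    G.gainGroup F u = G.gainGroup F w := by
  obtain ⟨γ, hγ⟩ := h
  ext x
  simp only [mem_gainGroup]
  constructor
  · intro hx
    simpa [add_comm, add_left_comm] using (hγ.reverse.append hx).append hγ
  · intro hx
    simpa [add_comm, add_left_comm] using (hγ.append hx).append hγ.reverse

theorem Walk.gain_eq_of_gainGroup_eq_bot {u w : G.V} (hbot : G.gainGroup F u = ⊥)
    {γ γ' : Γ} (h : G.Walk F u w γ) (h' : G.Walk F u w γ') : γ = γ' := by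
  have hmem : γ + -γ' ∈ G.gainGroup F u := mem_gainGroup.2 (h.append h'.reverse)
  rwa [hbot, AddSubgroup.mem_bot, ← sub_eq_add_neg, sub_eq_zero] at hmem

end Walks

section Components

variable {Γ : Type} {G : CMG Γ} {F : Set G.E} {v : G.V}

theorem vertsIn_empty : G.vertsIn (∅ : Set G.E) = ∅ :=
  Set.eq_empty_of_forall_notMem fun _ ⟨_, he, _⟩ => he

variable [AddCommGroup Γ]

def ConnectedOn (G : CMG Γ) (F : Set G.E) : Prop :=
  ∀ u ∈ G.vertsIn F, ∀ w ∈ G.vertsIn F, G.Reaches F u w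

def compEdges (G : CMG Γ) (F : Set G.E) (v : G.V) : Set G.E :=
  {e | e ∈ F ∧ G.src e ∈ G.comp F v}

theorem comp_subset_vertsIn (hv : v ∈ G.vertsIn F) : G.comp F v ⊆ G.vertsIn F := by
  rintro w ⟨γ, hw⟩
  rcases hw.eq_or_mem_vertsIn with rfl | h
  exacts [hv, h.2]

theorem comp_eq_of_mem {w : G.V} (hw : w ∈ G.comp F v) : G.comp F w = G.comp F v := by
  ext x
  exact ⟨hw.trans, hw.symm.trans⟩

theorem dst_mem_comp {e : G.E} (he : e ∈ G.compEdges F v) : G.dst e ∈ G.comp F v :=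
  Reaches.trans he.2 (.of_mem he.1)

theorem mem_compEdges_of_dst {e : G.E} (he : e ∈ F) (hd : G.dst e ∈ G.comp F v) :
    e ∈ G.compEdges F v :=
  ⟨he, Reaches.trans hd (Reaches.of_mem he).symm⟩

theorem vertsIn_compEdges (hv : v ∈ G.vertsIn F) :
    G.vertsIn (G.compEdges F v) = G.comp F v := by
  ext w
  constructor
  · rintro ⟨e, he, rfl | rfl⟩
    exacts [he.2, dst_mem_comp he]
  · intro hw
    obtain ⟨e, he, h | h⟩ := comp_subset_vertsIn hv hw
    · exact ⟨e, ⟨he, h ▸ hw⟩, .inl h⟩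
    · exact ⟨e, mem_compEdges_of_dst he (h ▸ hw), .inr h⟩

theorem vertsIn_diff_compEdges :
    G.vertsIn (F \ G.compEdges F v) = G.vertsIn F \ G.comp F v := by
  ext w
  constructor
  · rintro ⟨e, ⟨he, he'⟩, hinc⟩
    refine ⟨⟨e, he, hinc⟩, fun hw => he' ?_⟩
    rcases hinc with rfl | rfl
    exacts [⟨he, hw⟩, mem_compEdges_of_dst he hw]
  · rintro ⟨⟨e, he, hinc⟩, hw⟩
    refine ⟨e, ⟨he, fun hc => hw ?_⟩, hinc⟩
    rcases hinc with rfl | rfl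
    exacts [hc.2, dst_mem_comp hc]

theorem walk_compEdges_iff {w x : G.V} {γ : Γ} (hw : w ∈ G.comp F v) :
    G.Walk (G.compEdges F v) w x γ ↔ G.Walk F w x γ := by
  refine ⟨Walk.mono fun e he => he.1, fun h => ?_⟩
  induction h with
  | nil => exact .nil _
  | fwd e he _ ih => exact .fwd e ⟨he, hw⟩ (ih (hw.trans (.of_mem he)))
  | bwd e he _ ih =>
      exact .bwd e (mem_compEdges_of_dst he hw) (ih (hw.trans (Reaches.of_mem he).symm))

theorem walk_diff_compEdges_iff {w x : G.V} {γ : Γ} (hw : w ∉ G.comp F v) :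
    G.Walk (F \ G.compEdges F v) w x γ ↔ G.Walk F w x γ := by
  refine ⟨Walk.mono fun e he => he.1, fun h => ?_⟩
  induction h with
  | nil => exact .nil _
  | fwd e he _ ih =>
      exact .fwd e ⟨he, fun hc => hw hc.2⟩
        (ih fun hc => hw (mem_compEdges_of_dst he hc).2)
  | bwd e he _ ih =>
      exact .bwd e ⟨he, fun hc => hw (dst_mem_comp hc)⟩
        (ih fun hc => hw (hc.trans (.of_mem he)))

theorem comp_compEdges {w : G.V} (hw : w ∈ G.comp F v) :
    G.comp (G.compEdges F v) w = G.comp F w ∧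
      G.gainGroup (G.compEdges F v) w = G.gainGroup F w := by
  simp only [comp, gainGroup, Reaches, walk_compEdges_iff hw, and_self]

theorem comp_diff_compEdges {w : G.V} (hw : w ∉ G.comp F v) :
    G.comp (F \ G.compEdges F v) w = G.comp F w ∧
      G.gainGroup (F \ G.compEdges F v) w = G.gainGroup F w := by
  simp only [comp, gainGroup, Reaches, walk_diff_compEdges_iff hw, and_self]

theorem connectedOn_compEdges (hv : v ∈ G.vertsIn F) : G.ConnectedOn (G.compEdges F v) := by
  have hreach : ∀ w ∈ G.vertsIn (G.compEdges F v), G.Reaches (G.compEdges F v) v w := by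
    rintro w hw
    rw [vertsIn_compEdges hv] at hw
    obtain ⟨γ, hγ⟩ := hw
    exact ⟨γ, (walk_compEdges_iff (Reaches.refl v)).2 hγ⟩
  exact fun u hu w hw => (hreach u hu).symm.trans (hreach w hw)

theorem compCount_split (hv : v ∈ G.vertsIn F) (i : ℕ) :
    G.compCount F i = G.compCount (G.compEdges F v) i + G.compCount (F \ G.compEdges F v) i := by
  unfold compCount
  rw [← Set.ncard_union_eq _ (Set.toFinite _) (Set.toFinite _)]
  · congr 1
    ext S
    simp only [Set.mem_union, Set.mem_ofPred_eq, vertsIn_compEdges hv,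
      vertsIn_diff_compEdges, Set.mem_sdiff]
    constructor
    · rintro ⟨w, hw, rfl, hrk⟩
      by_cases hwc : w ∈ G.comp F v
      · exact .inl ⟨w, hwc, (comp_compEdges hwc).1.symm, (comp_compEdges hwc).2 ▸ hrk⟩
      · exact .inr ⟨w, ⟨hw, hwc⟩, (comp_diff_compEdges hwc).1.symm,
          (comp_diff_compEdges hwc).2 ▸ hrk⟩
    · rintro (⟨w, hw, rfl, hrk⟩ | ⟨w, ⟨hw, hwc⟩, rfl, hrk⟩)
      · exact ⟨w, comp_subset_vertsIn hv hw, (comp_compEdges hw).1,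
          (comp_compEdges hw).2 ▸ hrk⟩
      · exact ⟨w, hw, (comp_diff_compEdges hwc).1, (comp_diff_compEdges hwc).2 ▸ hrk⟩
  · rw [Set.disjoint_left]
    rintro S ⟨w, hw, rfl, -⟩ ⟨w', hw', hS, -⟩
    rw [vertsIn_compEdges hv] at hw
    rw [vertsIn_diff_compEdges] at hw'
    have hw'S : w' ∈ G.comp (G.compEdges F v) w := hS ▸ Reaches.refl w'
    rw [(comp_compEdges hw).1, comp_eq_of_mem hw] at hw'S
    exact hw'.2 hw'S

theorem compCount_empty (i : ℕ) : G.compCount ∅ i = 0 := by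
  simp [compCount, vertsIn_empty]

theorem compCount_eq_of_connectedOn (hF : G.ConnectedOn F) (hv : v ∈ G.vertsIn F) (i : ℕ) :
    G.compCount F i = if subgroupRank (G.gainGroup F v) = i then 1 else 0 := by
  have hcomps : {S : Set G.V | ∃ w ∈ G.vertsIn F, S = G.comp F w ∧
      subgroupRank (G.gainGroup F w) = i} =
      if subgroupRank (G.gainGroup F v) = i then {G.comp F v} else ∅ := by
    ext S
    have hw : ∀ w ∈ G.vertsIn F, G.comp F w = G.comp F v ∧ G.gainGroup F w = G.gainGroup F v :=
      fun w hw => ⟨comp_eq_of_mem (hF v hv w hw), (hF v hv w hw).gainGroup_eq.symm⟩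
    split_ifs with hr
    · refine ⟨fun ⟨w, hwF, hS, _⟩ => hS.trans (hw w hwF).1, fun hS => ⟨v, hv, hS, hr⟩⟩
    · exact ⟨fun ⟨w, hwF, _, hrk⟩ => hr ((hw w hwF).2 ▸ hrk), False.elim⟩
  rw [compCount, hcomps]
  split_ifs <;> simp

theorem one_le_compCount {w : G.V} (hw : w ∈ G.vertsIn F) :
    1 ≤ G.compCount F (subgroupRank (G.gainGroup F w)) :=
  (Set.ncard_pos (Set.toFinite _)).2 ⟨_, w, hw, rfl, rfl⟩

end Components

section Lift

variable {Γ : Type} [AddCommGroup Γ] {G : CMG Γ}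

instance [Finite Γ] : Finite G.liftU.E := inferInstanceAs (Finite (G.E × Γ))

theorem uverts_liftEdges (F : Set G.E) :
    G.liftU.uverts (G.liftEdges F) = G.vertsIn F ×ˢ Set.univ := by
  ext ⟨v, δ⟩
  constructor
  · rintro ⟨⟨e, β⟩, he, h | h⟩ <;> cases h
    exacts [⟨⟨e, he, .inl rfl⟩, trivial⟩, ⟨⟨e, he, .inr rfl⟩, trivial⟩]
  · rintro ⟨⟨e, he, rfl | rfl⟩, -⟩
    · exact ⟨(e, δ), he, .inl rfl⟩
    · exact ⟨(e, δ - G.color e), he, .inr (by simp [liftU])⟩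

theorem ncard_liftEdges [Finite Γ] (F : Set G.E) :
    (G.liftEdges F).ncard = F.ncard * Nat.card Γ := by
  have h : G.liftEdges F = (F ×ˢ Set.univ : Set (G.E × Γ)) :=
    Set.ext fun _ => ⟨fun h => ⟨h, trivial⟩, fun h => h.1⟩
  rw [h]
  exact Set.ncard_prod.trans (by rw [Set.ncard_univ])

theorem ncard_uverts_liftEdges [Finite Γ] (F : Set G.E) :
    (G.liftU.uverts (G.liftEdges F)).ncard = (G.vertsIn F).ncard * Nat.card Γ := by
  rw [uverts_liftEdges]
  exact Set.ncard_prod.trans (by rw [Set.ncard_univ])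

theorem subset_liftEdges_fst_image (C : Set G.liftU.E) : C ⊆ G.liftEdges (Prod.fst '' C) :=
  fun c hc => ⟨c, hc, rfl⟩

theorem fst_image_uverts (A : Set G.liftU.E) :
    Prod.fst '' G.liftU.uverts A = G.vertsIn (Prod.fst '' A) := by
  ext v
  constructor
  · rintro ⟨x, ⟨c, hc, rfl | rfl⟩, rfl⟩
    exacts [⟨c.1, ⟨c, hc, rfl⟩, .inl rfl⟩, ⟨c.1, ⟨c, hc, rfl⟩, .inr rfl⟩]
  · rintro ⟨e, ⟨c, hc, rfl⟩, rfl | rfl⟩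
    exacts [⟨_, ⟨c, hc, .inl rfl⟩, rfl⟩, ⟨_, ⟨c, hc, .inr rfl⟩, rfl⟩]

theorem Walk.liftU_reaches {F : Set G.E} {u w : G.V} {γ : Γ} (h : G.Walk F u w γ) (δ : Γ) :
    G.liftU.Reaches (G.liftEdges F) (u, δ) (w, γ + δ) := by
  induction h generalizing δ with
  | nil v => rw [zero_add]; exact .refl
  | @fwd x γ' e he _ ih =>
      have h := ih (G.color e + δ)
      rw [show γ' + (G.color e + δ) = G.color e + γ' + δ by abel] at h
      exact .head ⟨(e, δ), he, .inl ⟨rfl, rfl⟩⟩ h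
  | @bwd x γ' e he _ ih =>
      have h := ih (δ - G.color e)
      rw [show γ' + (δ - G.color e) = -G.color e + γ' + δ by abel] at h
      exact .head ⟨(e, δ - G.color e), he, .inr ⟨rfl, by simp [liftU]⟩⟩ h

theorem walk_of_liftU_reaches {F : Set G.E} {a b : G.liftU.V}
    (h : G.liftU.Reaches (G.liftEdges F) a b) : G.Walk F a.1 b.1 (b.2 - a.2) := by
  induction h with
  | refl => simpa using Walk.nil a.1
  | tail _ hstep ih =>
      obtain ⟨⟨e, β⟩, he, ⟨rfl, rfl⟩ | ⟨rfl, rfl⟩⟩ := hstep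
      · show G.Walk F a.1 (G.dst e) (G.color e + β - a.2)
        rw [show G.color e + β - a.2 = β - a.2 + G.color e by abel]
        exact ih.append (Walk.single_fwd he)
      · show G.Walk F a.1 (G.src e) (β - a.2)
        rw [show β - a.2 = G.color e + β - a.2 + -G.color e by abel]
        exact ih.append (Walk.single_bwd he)

theorem _root_.UMG.ConnectedOn.fst_image {C : Set G.liftU.E} (hC : G.liftU.ConnectedOn C) :
    G.ConnectedOn (Prod.fst '' C) := by
  rintro _ hu _ hw
  rw [← fst_image_uverts] at hu hw
  obtain ⟨x, hx, rfl⟩ := hu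
  obtain ⟨y, hy, rfl⟩ := hw
  exact ⟨_, walk_of_liftU_reaches ((hC x hx y hy).mono (subset_liftEdges_fst_image C))⟩

theorem connectedOn_liftEdges {F : Set G.E} (hF : G.ConnectedOn F)
    (htop : ∀ w ∈ G.vertsIn F, G.gainGroup F w = ⊤) : G.liftU.ConnectedOn (G.liftEdges F) := by
  intro a ha b hb
  rw [uverts_liftEdges] at ha hb
  obtain ⟨γ, hab⟩ := hF a.1 ha.1 b.1 hb.1
  have hloop : G.Walk F b.1 b.1 (b.2 - (γ + a.2)) :=
    mem_gainGroup.1 (htop b.1 hb.1 ▸ AddSubgroup.mem_top _)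
  have := (hab.liftU_reaches a.2).trans (hloop.liftU_reaches (γ + a.2))
  rwa [sub_add_cancel] at this

theorem injOn_fst_uverts {C : Set G.liftU.E} (hC : G.liftU.ConnectedOn C)
    (hbot : ∀ w ∈ G.vertsIn (Prod.fst '' C), G.gainGroup (Prod.fst '' C) w = ⊥) :
    Set.InjOn Prod.fst (G.liftU.uverts C) := by
  intro x hx y hy hxy
  have hloop := walk_of_liftU_reaches ((hC x hx y hy).mono (subset_liftEdges_fst_image C))
  rw [← hxy] at hloop
  have hx1 : x.1 ∈ G.vertsIn (Prod.fst '' C) := fst_image_uverts C ▸ Set.mem_image_of_mem _ hx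
  have h0 := mem_gainGroup.2 hloop
  rw [hbot x.1 hx1, AddSubgroup.mem_bot, sub_eq_zero] at h0
  exact Prod.ext hxy h0.symm

theorem injOn_fst_of_injOn_fst_uverts {C : Set G.liftU.E}
    (h : Set.InjOn Prod.fst (G.liftU.uverts C)) : Set.InjOn Prod.fst C := by
  intro a ha b hb hab
  have ha' : G.liftU.fst a ∈ G.liftU.uverts C := ⟨a, ha, .inl rfl⟩
  have hb' : G.liftU.fst b ∈ G.liftU.uverts C := ⟨b, hb, .inl rfl⟩
  exact Prod.ext hab (congrArg (Prod.snd : G.V × Γ → Γ) (h ha' hb' (congrArg G.src hab)))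

end Lift

section ConeLamanCount

variable {Γ : Type} [AddCommGroup Γ] {G : CMG Γ} {F : Set G.E} {v : G.V}

theorem coneLamanCount_of_compEdges (hv : v ∈ G.vertsIn F)
    (h₁ : G.ConeLamanCount (G.compEdges F v)) (h₂ : G.ConeLamanCount (F \ G.compEdges F v)) :
    G.ConeLamanCount F := by
  have hm := Set.ncard_sdiff_add_ncard_of_subset (fun e he => he.1 : G.compEdges F v ⊆ F)
    (Set.toFinite F)
  have hn := Set.ncard_sdiff_add_ncard_of_subset (comp_subset_vertsIn hv) (Set.toFinite _)
  unfold ConeLamanCount at *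
  rw [vertsIn_compEdges hv] at h₁
  rw [vertsIn_diff_compEdges] at h₂
  simp only [compCount_split hv]
  omega

variable {p : ℕ} [Fact p.Prime] {G : CMG (ZMod p)} {F : Set G.E} {v : G.V}

theorem coneLamanCount_iff_of_gainGroup_eq_bot (hF : G.ConnectedOn F) (hv : v ∈ G.vertsIn F)
    (h : G.gainGroup F v = ⊥) :
    G.ConeLamanCount F ↔ (F.ncard : ℤ) ≤ 2 * (G.vertsIn F).ncard - 3 := by
  simp [ConeLamanCount, compCount_eq_of_connectedOn hF hv, subgroupRank_eq_zero_iff.2 h]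

theorem coneLamanCount_iff_of_gainGroup_ne_bot (hF : G.ConnectedOn F) (hv : v ∈ G.vertsIn F)
    (h : G.gainGroup F v ≠ ⊥) :
    G.ConeLamanCount F ↔ (F.ncard : ℤ) ≤ 2 * (G.vertsIn F).ncard - 1 := by
  simp [ConeLamanCount, compCount_eq_of_connectedOn hF hv, subgroupRank_eq_one_of_ne_bot h]

theorem one_le_compCount_zero_add_compCount_one (hv : v ∈ G.vertsIn F) :
    1 ≤ G.compCount F 0 + G.compCount F 1 := by
  have := one_le_compCount hv
  by_cases h : G.gainGroup F v = ⊥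
  · rw [subgroupRank_eq_zero_iff.2 h] at this
    omega
  · rw [subgroupRank_eq_one_of_ne_bot h] at this
    omega

end ConeLamanCount

section Backward

variable {Γ : Type} [AddCommGroup Γ] {G : CMG Γ} {F : Set G.E}

theorem exists_potential_of_gainGroup_eq_bot {v : G.V} (hF : G.ConnectedOn F)
    (hv : v ∈ G.vertsIn F) (hbot : G.gainGroup F v = ⊥) :
    ∃ φ : G.V → Γ, ∀ e ∈ F, φ (G.dst e) = G.color e + φ (G.src e) := by
  choose! φ hφ using fun w (hw : w ∈ G.vertsIn F) => hF v hv w hw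
  refine ⟨φ, fun e he => ?_⟩
  have h := (hφ _ ⟨e, he, .inl rfl⟩).append (Walk.single_fwd he)
  rw [Walk.gain_eq_of_gainGroup_eq_bot hbot (hφ _ ⟨e, he, .inr rfl⟩) h, add_comm]

/-- A potential `φ` on `F` embeds `F` into the lift as the sheet `{(e, φ (src e))}`. -/
theorem ncard_le_of_liftU_lamanSparse_of_potential (hL : G.liftU.LamanSparse)
    (hne : F.Nonempty) {φ : G.V → Γ} (hφ : ∀ e ∈ F, φ (G.dst e) = G.color e + φ (G.src e)) :
    (F.ncard : ℤ) ≤ 2 * (G.vertsIn F).ncard - 3 := by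
  let sheet : G.E → G.liftU.E := fun e => (e, φ (G.src e))
  have hdst : ∀ e ∈ F, G.liftU.snd (sheet e) = (G.dst e, φ (G.dst e)) := fun e he => by
    rw [hφ e he]; rfl
  let sheetV : G.V → G.liftU.V := fun w => (w, φ w)
  have huv : G.liftU.uverts (sheet '' F) = sheetV '' G.vertsIn F := by
    ext x
    constructor
    · rintro ⟨_, ⟨e, he, rfl⟩, rfl | rfl⟩
      exacts [⟨G.src e, ⟨e, he, .inl rfl⟩, rfl⟩, ⟨G.dst e, ⟨e, he, .inr rfl⟩, (hdst e he).symm⟩]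
    · rintro ⟨w, ⟨e, he, rfl | rfl⟩, rfl⟩
      exacts [⟨sheet e, ⟨e, he, rfl⟩, .inl rfl⟩, ⟨sheet e, ⟨e, he, rfl⟩, .inr (hdst e he)⟩]
  have h := hL (sheet '' F) ((Set.toFinite F).image sheet) (hne.image sheet)
  have hinj : sheet.Injective := fun _ _ h => congrArg Prod.fst h
  have hinjV : sheetV.Injective := fun _ _ h => congrArg Prod.fst h
  rwa [huv, Set.ncard_image_of_injective _ hinj, Set.ncard_image_of_injective _ hinjV] at h

theorem ncard_le_of_liftU_lamanSparse [Finite Γ] (hL : G.liftU.LamanSparse) (hne : F.Nonempty) :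
    (F.ncard : ℤ) ≤ 2 * (G.vertsIn F).ncard - 1 := by
  obtain ⟨e, he⟩ := hne
  have h := hL (G.liftEdges F) (Set.toFinite _) ⟨(e, 0), he⟩
  rw [ncard_liftEdges, ncard_uverts_liftEdges] at h
  have hΓ : 0 < Nat.card Γ := Nat.card_pos
  push_cast at h
  nlinarith

theorem compCountTop_eq_compCount_univ (h : G.vertsIn Set.univ = Set.univ) (i : ℕ) :
    G.compCountTop i = G.compCount Set.univ i := by
  simp [compCountTop, compCount, h]

variable {p : ℕ} [Fact p.Prime] {G : CMG (ZMod p)} {F : Set G.E}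

theorem coneLamanCount_of_liftU_lamanSparse_of_connectedOn (hL : G.liftU.LamanSparse)
    (hF : G.ConnectedOn F) (hne : F.Nonempty) : G.ConeLamanCount F := by
  obtain ⟨e, he⟩ := hne
  have hv : G.src e ∈ G.vertsIn F := ⟨e, he, .inl rfl⟩
  by_cases hbot : G.gainGroup F (G.src e) = ⊥
  · obtain ⟨φ, hφ⟩ := exists_potential_of_gainGroup_eq_bot hF hv hbot
    exact (coneLamanCount_iff_of_gainGroup_eq_bot hF hv hbot).2
      (ncard_le_of_liftU_lamanSparse_of_potential hL ⟨e, he⟩ hφ)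
  · exact (coneLamanCount_iff_of_gainGroup_ne_bot hF hv hbot).2
      (ncard_le_of_liftU_lamanSparse hL ⟨e, he⟩)

theorem coneLamanSparse_of_liftU_lamanSparse (hL : G.liftU.LamanSparse) :
    G.IsConeLamanSparse := by
  intro F
  induction hF : F.ncard using Nat.strong_induction_on generalizing F with
  | _ n ih =>
  rcases F.eq_empty_or_nonempty with rfl | ⟨e, he⟩
  · simp [ConeLamanCount, vertsIn_empty, compCount_empty]
  have hv : G.src e ∈ G.vertsIn F := ⟨e, he, .inl rfl⟩
  have he₁ : e ∈ G.compEdges F (G.src e) := ⟨he, .refl _⟩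
  have hlt : (F \ G.compEdges F (G.src e)).ncard < n :=
    hF ▸ Set.ncard_lt_ncard ⟨Set.sdiff_subset, fun h => (h he).2 he₁⟩ (Set.toFinite F)
  exact coneLamanCount_of_compEdges hv
    (coneLamanCount_of_liftU_lamanSparse_of_connectedOn hL (connectedOn_compEdges hv) ⟨e, he₁⟩)
    (ih _ hlt _ rfl)

theorem isConeLaman_of_liftU_lamanSparse (hL : G.liftU.LamanSparse)
    (hcard : (Nat.card G.E : ℤ) = 2 * Nat.card G.V - 1) : G.IsConeLaman := by
  have hsparse := coneLamanSparse_of_liftU_lamanSparse hL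
  refine ⟨hsparse, ?_⟩
  obtain ⟨e⟩ : Nonempty G.E := (Nat.card_pos_iff.1 (by omega)).1
  have hc := one_le_compCount_zero_add_compCount_one (⟨e, trivial, .inl rfl⟩ :
    G.src e ∈ G.vertsIn Set.univ)
  have hcount := hsparse Set.univ
  unfold ConeLamanCount at hcount
  rw [Set.ncard_univ] at hcount
  have hle : (G.vertsIn Set.univ).ncard ≤ Nat.card G.V :=
    Set.ncard_univ G.V ▸ Set.ncard_le_ncard (Set.subset_univ _)
  have hall : G.vertsIn Set.univ = Set.univ :=
    Set.eq_of_subset_of_ncard_le (Set.subset_univ _) (by rw [Set.ncard_univ]; omega)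
  simp only [compCountTop_eq_compCount_univ hall]
  omega

end Backward

section Forward

variable {Γ : Type} [AddCommGroup Γ] {G : CMG Γ}

def liftShift (G : CMG Γ) (δ : Γ) : G.liftU.E ≃ G.liftU.E :=
  (Equiv.refl G.E).prodCongr (Equiv.addRight δ)

theorem ncard_uverts_image_liftShift (δ : Γ) (A : Set G.liftU.E) :
    (G.liftU.uverts (G.liftShift δ '' A)).ncard = (G.liftU.uverts A).ncard := by
  let shiftV : G.liftU.V ≃ G.liftU.V := (Equiv.refl G.V).prodCongr (Equiv.addRight δ)
  have hsnd : ∀ c : G.liftU.E, G.liftU.snd (G.liftShift δ c) = shiftV (G.liftU.snd c) :=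
    fun c => Prod.ext rfl (add_assoc _ _ _).symm
  have h : G.liftU.uverts (G.liftShift δ '' A) = shiftV '' G.liftU.uverts A := by
    ext x
    constructor
    · rintro ⟨_, ⟨c, hc, rfl⟩, rfl | rfl⟩
      exacts [⟨_, ⟨c, hc, .inl rfl⟩, rfl⟩, ⟨_, ⟨c, hc, .inr rfl⟩, (hsnd c).symm⟩]
    · rintro ⟨_, ⟨c, hc, rfl | rfl⟩, rfl⟩
      exacts [⟨_, ⟨c, hc, rfl⟩, .inl rfl⟩, ⟨_, ⟨c, hc, rfl⟩, .inr (hsnd c)⟩]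
  rw [h, Set.ncard_image_of_injective _ shiftV.injective]

theorem violatesLaman_image_liftShift_iff {δ : Γ} {A : Set G.liftU.E} :
    G.liftU.ViolatesLaman (G.liftShift δ '' A) ↔ G.liftU.ViolatesLaman A := by
  simp only [UMG.ViolatesLaman, ncard_uverts_image_liftShift,
    Set.ncard_image_of_injective _ (G.liftShift δ).injective, Set.image_nonempty,
    Set.finite_image_iff (G.liftShift δ).injective.injOn]

theorem _root_.UMG.LamanCircuit.image_liftShift {C : Set G.liftU.E}
    (hC : G.liftU.LamanCircuit C) (δ : Γ) : G.liftU.LamanCircuit (G.liftShift δ '' C) := by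
  refine ⟨violatesLaman_image_liftShift_iff.2 hC.1, fun D hD hDv => ?_⟩
  have hD' := (G.liftShift δ).symm.injective.image_strictMono hD
  rw [Equiv.symm_image_image] at hD'
  rw [← (G.liftShift δ).image_symm_image D, violatesLaman_image_liftShift_iff] at hDv
  exact hC.2 _ hD' hDv

theorem two_mul_ncard_uverts_liftEdges_le [Finite Γ] {C : Set G.liftU.E}
    (hC : G.liftU.LamanCircuit C) (hconn : G.liftU.ConnectedOn (G.liftEdges (Prod.fst '' C))) :
    2 * (G.liftU.uverts (G.liftEdges (Prod.fst '' C))).ncard ≤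
      (G.liftEdges (Prod.fst '' C)).ncard + 2 := by
  set B := G.liftEdges (Prod.fst '' C)
  have hshift : ∀ δ, G.liftShift δ '' C ⊆ B := by
    rintro δ _ ⟨c, hc, rfl⟩
    exact ⟨c, hc, rfl⟩
  suffices h : ∀ n, ∀ U ⊆ B, (B \ U).ncard = n → U.Nonempty →
      2 * (G.liftU.uverts U).ncard ≤ U.ncard + 2 → 2 * (G.liftU.uverts B).ncard ≤ B.ncard + 2 from
    h _ C (subset_liftEdges_fst_image C) rfl hC.1.2.1 hC.two_mul_ncard_uverts_le
  intro n
  induction n using Nat.strong_induction_on with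
  | _ n ih =>
  intro U hUB hn hU hdense
  rcases hUB.eq_or_ssubset with rfl | hUB
  · exact hdense
  obtain ⟨g, ⟨hgB, hgU⟩, a, ha, hga⟩ := hconn.exists_incident_of_ssubset hUB hU
  obtain ⟨c, hc, hcg⟩ : g.1 ∈ Prod.fst '' C := id hgB
  have hgD : g ∈ G.liftShift (g.2 - c.2) '' C :=
    ⟨c, hc, Prod.ext hcg (add_sub_cancel c.2 g.2)⟩
  have hlt : (B \ (G.liftShift (g.2 - c.2) '' C ∪ U)).ncard < n :=
    hn ▸ Set.ncard_lt_ncard ⟨Set.sdiff_subset_sdiff_right Set.subset_union_right,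
      fun h => (h ⟨hgB, hgU⟩).2 (.inl hgD)⟩ (Set.toFinite _)
  exact ih _ hlt _ (Set.union_subset (hshift _) hUB.1) rfl (hU.mono Set.subset_union_right)
    ((hC.image_liftShift _).two_mul_ncard_uverts_union_le (Set.toFinite U) hdense
      (fun h => hgU (h hgD)) ⟨a, ⟨g, hgD, hga⟩, ha⟩)

variable {p : ℕ} [Fact p.Prime] {G : CMG (ZMod p)}

theorem liftU_lamanSparse_of_coneLamanSparse (hp : 3 ≤ p) (hG : G.IsConeLamanSparse) :
    G.liftU.LamanSparse := by
  intro A hA hAne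
  by_contra hviol
  obtain ⟨C, hC⟩ := UMG.exists_lamanCircuit ⟨hA, hAne, hviol⟩
  set F := Prod.fst '' C
  have hF : G.ConnectedOn F := hC.connectedOn.fst_image
  obtain ⟨c, hc⟩ := hC.1.2.1
  have hv : G.src c.1 ∈ G.vertsIn F := ⟨c.1, ⟨c, hc, rfl⟩, .inl rfl⟩
  by_cases hbot : G.gainGroup F (G.src c.1) = ⊥
  · have hinjV := injOn_fst_uverts hC.connectedOn fun w hw => (hF _ hv w hw).gainGroup_eq ▸ hbot
    have hcount := (coneLamanCount_iff_of_gainGroup_eq_bot hF hv hbot).1 (hG F)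
    rw [(injOn_fst_of_injOn_fst_uverts hinjV).ncard_image, ← fst_image_uverts,
      hinjV.ncard_image] at hcount
    exact hC.1.2.2 hcount
  · have htop : ∀ w ∈ G.vertsIn F, G.gainGroup F w = ⊤ := fun w hw =>
      ZMod.addSubgroup_eq_top_of_ne_bot ((hF _ hv w hw).gainGroup_eq ▸ hbot)
    have hcount := (coneLamanCount_iff_of_gainGroup_ne_bot hF hv hbot).1 (hG F)
    have hdense := two_mul_ncard_uverts_liftEdges_le hC (connectedOn_liftEdges hF htop)
    rw [ncard_liftEdges, ncard_uverts_liftEdges, Nat.card_zmod] at hdense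
    zify at hdense hp
    nlinarith

end Forward

end CMG

/-- Let `p` be an odd prime and `(G,γ)` a `ℤ/pℤ`-colored
graph with `n` vertices and `2n - 1` edges.  Then `(G,γ)` is a cone-Laman
graph if and only if its symmetric lift is Laman-sparse. -/
theorem coneLaman_iff_lift_lamanSparse (p : ℕ) (hp : p.Prime) (hodd : Odd p)
    (G : CMG (ZMod p))
    (hcard : (Nat.card G.E : ℤ) = 2 * Nat.card G.V - 1) :
    G.IsConeLaman ↔ (CMG.liftU G).LamanSparse := by
  have : Fact p.Prime := ⟨hp⟩
  have hp3 : 3 ≤ p := by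
    obtain ⟨k, rfl⟩ := hodd
    have := hp.two_le
    omega
  exact ⟨fun h => CMG.liftU_lamanSparse_of_coneLamanSparse hp3 h.1,
    fun h => CMG.isConeLaman_of_liftU_lamanSparse h hcard⟩
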